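/- arXiv:1306.6232 — 3 statements merged into one kernel-verified Lean document; each statement's English description precedes it below -/
import Mathlib

section
/- Fix k ≥ 1. In the ring of multivariate formal power series over ℚ in variables x_1, …, x_k, let C be the series whose coefficient at the monomial x_1^{d_1}⋯x_k^{d_k} is the number of Carlitz words on the alphabet {1,…,k} in which letter i appears exactly d_i times. Then C · (1 − Σ_{i=1}^k x_i·(1 + x_i)^{-1}) = 1, where (1 + x_i)^{-1} denotes the multiplicative inverse of the power series 1 + x_i. -/
/-!
Let `H_a` count the Carlitz words beginning with the letter `a`. Such a word is `a` followed by a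
Carlitz word not beginning with `a`, so `H_a = x_a (C - H_a)`, that is `H_a = C x_a (1 + x_a)⁻¹`.
Every nonempty word begins with some letter, so `C = 1 + ∑_a H_a = 1 + C ∑_a x_a (1 + x_a)⁻¹`.
-/

open MvPowerSeries

section Words

variable {α : Type*} [DecidableEq α]

def carlitzWords (d : α →₀ ℕ) : Set (List α) :=
  {w | w.IsChain (· ≠ ·) ∧ ∀ a, w.count a = d a}

instance (d : α →₀ ℕ) : Finite (carlitzWords d) := by
  refine Set.Finite.to_subtype <| (Multiset.lists (Finsupp.toMultiset d)).toFinset.finite_toSet.subset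
    fun w hw => ?_
  rw [Finset.mem_coe, Multiset.mem_toFinset, Multiset.mem_lists_iff]
  ext a
  simp [hw.2 a]

theorem nil_mem_carlitzWords {d : α →₀ ℕ} : [] ∈ carlitzWords d ↔ d = 0 := by
  simp [carlitzWords, Finsupp.ext_iff, eq_comm]

theorem cons_mem_carlitzWords {d : α →₀ ℕ} {a : α} {w : List α} :
    a :: w ∈ carlitzWords (d + Finsupp.single a 1) ↔ w ∈ carlitzWords d ∧ w.head? ≠ some a := by
  simp only [carlitzWords, Set.mem_ofPred_eq, List.isChain_cons, List.count_cons,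
    Finsupp.add_apply, Finsupp.single_apply, beq_iff_eq, add_left_inj]
  rw [show (∀ b ∈ w.head?, a ≠ b) ↔ w.head? ≠ some a by cases w.head? <;> simp [eq_comm]]
  tauto

section Counting

variable (d : α →₀ ℕ) (a : α)

theorem card_carlitzWords_head_eq_none :
    Nat.card {w : carlitzWords d // w.1.head? = none} = if d = 0 then 1 else 0 := by
  simp only [List.head?_eq_none_iff]
  split_ifs with hd
  · subst hd
    have : Unique {w : carlitzWords (0 : α →₀ ℕ) // w.1 = []} :=
      { default := ⟨⟨[], nil_mem_carlitzWords.2 rfl⟩, rfl⟩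
        uniq := fun w => Subtype.ext (Subtype.ext w.2) }
    exact Nat.card_unique
  · have : IsEmpty {w : carlitzWords d // w.1 = []} :=
      ⟨fun ⟨⟨w, hw⟩, hnil⟩ => hd (nil_mem_carlitzWords.1 (hnil ▸ hw))⟩
    exact Nat.card_of_isEmpty

theorem card_carlitzWords_eq [Fintype α] :
    Nat.card (carlitzWords d) =
      (if d = 0 then 1 else 0) + ∑ a, Nat.card {w : carlitzWords d // w.1.head? = some a} := by
  rw [← Nat.card_congr (Equiv.sigmaFiberEquiv fun w : carlitzWords d => w.1.head?),
    Nat.card_sigma, Fintype.sum_option, card_carlitzWords_head_eq_none]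

theorem card_carlitzWords_head_eq_zero (hd : d a = 0) :
    Nat.card {w : carlitzWords d // w.1.head? = some a} = 0 := by
  have : IsEmpty {w : carlitzWords d // w.1.head? = some a} := by
    refine ⟨fun ⟨⟨w, hw⟩, hhead⟩ => ?_⟩
    have : w.count a = 0 := (hw.2 a).trans hd
    exact List.count_eq_zero.1 this (List.mem_of_mem_head? hhead)
  exact Nat.card_of_isEmpty

def carlitzWordsConsEquiv :
    {w : carlitzWords d // w.1.head? ≠ some a} ≃
      {w : carlitzWords (d + Finsupp.single a 1) // w.1.head? = some a} where
  toFun w := ⟨⟨a :: w.1.1, cons_mem_carlitzWords.2 ⟨w.1.2, w.2⟩⟩, rfl⟩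
  invFun w :=
    have h := cons_mem_carlitzWords.1 (List.eq_cons_of_mem_head? w.2 ▸ w.1.2)
    ⟨⟨w.1.1.tail, h.1⟩, h.2⟩
  left_inv _ := rfl
  right_inv w := Subtype.ext (Subtype.ext (List.eq_cons_of_mem_head? w.2).symm)

theorem card_carlitzWords_head_add_card_head_add_single :
    Nat.card {w : carlitzWords d // w.1.head? = some a} +
      Nat.card {w : carlitzWords (d + Finsupp.single a 1) // w.1.head? = some a} =
      Nat.card (carlitzWords d) := by
  rw [← Nat.card_congr (carlitzWordsConsEquiv d a), ← Nat.card_sum,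
    Nat.card_congr (Equiv.sumCompl _)]

end Counting

end Words

section Series

variable (R : Type*) [CommSemiring R] {α : Type*} [DecidableEq α]

noncomputable def carlitzSeries : MvPowerSeries α R :=
  fun d => Nat.card (carlitzWords d)

noncomputable def carlitzHeadSeries (a : α) : MvPowerSeries α R :=
  fun d => Nat.card {w : carlitzWords d // w.1.head? = some a}

theorem carlitzSeries_eq_one_add_sum [Fintype α] :
    carlitzSeries R = 1 + ∑ a : α, carlitzHeadSeries R a := by
  ext d
  rw [map_add, map_sum, coeff_one]
  change (Nat.card (carlitzWords d) : R) = _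
  rw [card_carlitzWords_eq]
  push_cast
  rfl

theorem carlitzHeadSeries_add_X_mul (a : α) :
    carlitzHeadSeries R a + X a * carlitzHeadSeries R a = X a * carlitzSeries R := by
  ext d
  rw [map_add, X, coeff_monomial_mul, coeff_monomial_mul]
  split_ifs with had
  · obtain ⟨d, rfl⟩ := exists_add_of_le had
    rw [add_tsub_cancel_left, one_mul, one_mul, add_comm, add_comm (Finsupp.single a 1) d]
    change (Nat.card _ : R) + Nat.card _ = Nat.card _
    rw [← Nat.cast_add, card_carlitzWords_head_add_card_head_add_single]
  · rw [Finsupp.single_le_iff, not_le, Nat.lt_one_iff] at had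
    change ((Nat.card _ : ℕ) : R) + 0 = 0
    rw [card_carlitzWords_head_eq_zero d a had, Nat.cast_zero, add_zero]

end Series

theorem carlitzSeries_mul_one_sub_sum {K α : Type*} [Field K] [DecidableEq α] [Fintype α] :
    carlitzSeries K * (1 - ∑ a : α, X a * (1 + X a)⁻¹) = 1 := by
  have hhead (a : α) : carlitzHeadSeries K a = carlitzSeries K * (X a * (1 + X a)⁻¹) := by
    have hunit : (1 + X a : MvPowerSeries α K)⁻¹ * (1 + X a) = 1 :=
      MvPowerSeries.inv_mul_cancel _ (by simp)
    calc carlitzHeadSeries K a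
        = (1 + X a)⁻¹ * ((1 + X a) * carlitzHeadSeries K a) := by rw [← mul_assoc, hunit, one_mul]
      _ = carlitzSeries K * (X a * (1 + X a)⁻¹) := by
        rw [add_mul, one_mul, carlitzHeadSeries_add_X_mul]; ring
  calc carlitzSeries K * (1 - ∑ a : α, X a * (1 + X a)⁻¹)
      = carlitzSeries K - ∑ a : α, carlitzHeadSeries K a := by
        simp only [hhead, mul_sub, mul_one, Finset.mul_sum]
    _ = 1 := by rw [carlitzSeries_eq_one_add_sum K, add_sub_cancel_right]

theorem stmt1_general (k : ℕ) (C : MvPowerSeries (Fin k) ℚ)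
    (hC : ∀ d : Fin k →₀ ℕ, MvPowerSeries.coeff d C =
      Nat.card {w : List (Fin k) // List.Chain' (· ≠ ·) w ∧ ∀ i, w.count i = d i}) :
    C * (1 - ∑ i, MvPowerSeries.X i * (1 + MvPowerSeries.X i)⁻¹) = 1 := by
  obtain rfl : C = carlitzSeries ℚ := MvPowerSeries.ext hC
  exact carlitzSeries_mul_one_sub_sum

/-- In `ℚ[[x_1,…,x_k]]`, if `C` is the series whose coefficient at `x_1^{d_1}⋯x_k^{d_k}`
counts the Carlitz words on `{1,…,k}` with letter `i` appearing `d i` times, then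
`C · (1 − Σ_i x_i (1 + x_i)⁻¹) = 1`. -/
theorem stmt1 (k : ℕ) (hk : 1 ≤ k) (C : MvPowerSeries (Fin k) ℚ)
    (hC : ∀ d : Fin k →₀ ℕ, MvPowerSeries.coeff d C =
      Nat.card {w : List (Fin k) // List.Chain' (· ≠ ·) w ∧ ∀ i, w.count i = d i}) :
    C * (1 - ∑ i, MvPowerSeries.X i * (1 + MvPowerSeries.X i)⁻¹) = 1 :=
  stmt1_general k C hC
end

section
/- Let S = {a_1, …, a_m} be an alphabet of m distinct letters and r_1, …, r_m fixed nonnegative integers. For each k ≥ 0 let n_k be the number of factorizations on S with exactly k parts such that each part is a Carlitz word and the letter a_i is used exactly r_i times for each i. Then ∏_{i=1}^m l_{r_i}(t) = Σ_{k≥0} n_k · l_k(t) in ℝ[t] (the sum is finite since n_k = 0 for k > r_1 + … + r_m). -/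
/-!
Write `B` for the Borel transform `X ^ j ↦ X ^ j / j!`. Then `l_(k+1) = B (X * (X - 1) ^ k)`, and
since `(B (X * f))' = B f` this gives `l_(k+1)' = l_k - l_k'`.

Let `F c` be the sum of `l_(parts φ)` over the Carlitz factorizations `φ` of content `c`
(letter `i` used `c i` times), and `F_x c` the part of it coming from factorizations whose first
letter is `x`. Deleting that first letter either removes a part `[x]` or shortens the first part
to one not starting with `x`; hence `(F_x (c + e_x))' = F c - (F_x c)'`. The derivative of the
`x`-th factor of `∏ l_(c i)` satisfies the same recursion, so induction on `∑ c` gives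
`(F_x c)' = (∏_(i ≠ x) l_(c i)) * l_(c x)'`. Summing over `x`, `F c` and `∏ l_(c i)` have the
same derivative, and both vanish at `0` for `c ≠ 0`.
-/

/-- The Laguerre-type polynomial `l_k(t)`: `l_0 = 1` and for `k ≥ 1`,
`l_k(t) = Σ_{i=1}^{k} (−1)^{k−i} C(k−1, i−1) t^i / i!`. -/
noncomputable def lag (k : ℕ) : Polynomial ℝ :=
  if k = 0 then 1
  else ∑ i ∈ Finset.Icc 1 k,
    Polynomial.C ((-1 : ℝ) ^ (k - i) * (Nat.choose (k - 1) (i - 1)) / (Nat.factorial i)) *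
      Polynomial.X ^ i

open Polynomial Finset

section Borel

variable {K : Type*} [Field K]

noncomputable def borelTransform : K[X] →ₗ[K] K[X] :=
  lsum fun j => LinearMap.toSpanSingleton K K[X] (C (j.factorial : K)⁻¹ * X ^ j)

theorem coeff_borelTransform (f : K[X]) (n : ℕ) :
    (borelTransform f).coeff n = f.coeff n / n.factorial := by
  simp only [borelTransform, lsum_apply, LinearMap.toSpanSingleton_apply, Polynomial.sum_def,
    finsetSum_coeff, coeff_smul, coeff_C_mul, coeff_X_pow, smul_eq_mul]
  rw [sum_eq_single n]
  · simp [div_eq_mul_inv, mul_comm]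
  · intro j _ hj; simp [Ne.symm hj]
  · intro hn; simp [notMem_support_iff.mp hn]

theorem borelTransform_one : borelTransform (1 : K[X]) = 1 := by
  ext n; rcases n with _ | n <;> simp [coeff_borelTransform, coeff_one]

theorem coeff_zero_borelTransform_X_mul (f : K[X]) : (borelTransform (X * f)).coeff 0 = 0 := by
  simp [coeff_borelTransform]

theorem derivative_borelTransform_X_mul [CharZero K] (f : K[X]) :
    derivative (borelTransform (X * f)) = borelTransform f := by
  ext n
  rw [coeff_derivative, coeff_borelTransform, coeff_borelTransform, coeff_X_mul,
    Nat.factorial_succ]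
  push_cast
  field_simp

end Borel

theorem lag_zero : lag 0 = 1 := if_pos rfl

theorem lag_succ_eq_borelTransform (k : ℕ) :
    lag (k + 1) = borelTransform (X * (X - 1) ^ k) := by
  ext n
  rw [coeff_borelTransform, lag, if_neg k.succ_ne_zero, finsetSum_coeff]
  simp only [coeff_C_mul, coeff_X_pow, mul_ite, mul_one, mul_zero, sum_ite_eq, mem_Icc]
  rcases n with _ | j
  · simp
  · have hX : (X - 1 : ℝ[X]) = X + C (-1) := by simp [sub_eq_add_neg]
    rw [coeff_X_mul, hX, coeff_X_add_C_pow]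
    by_cases hj : j ≤ k
    · simp [hj, Nat.add_sub_add_right]
    · simp [hj, Nat.choose_eq_zero_of_lt (not_le.mp hj)]

theorem derivative_lag_succ (k : ℕ) : derivative (lag (k + 1)) = lag k - derivative (lag k) := by
  rw [lag_succ_eq_borelTransform, derivative_borelTransform_X_mul]
  cases k with
  | zero => simp [lag_zero, borelTransform_one]
  | succ k =>
    rw [lag_succ_eq_borelTransform, derivative_borelTransform_X_mul, ← map_sub]
    congr 1
    ring

theorem eval_zero_lag_succ (k : ℕ) : (lag (k + 1)).eval 0 = 0 := by
  rw [← coeff_zero_eq_eval_zero, lag_succ_eq_borelTransform, coeff_zero_borelTransform_X_mul]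

theorem Polynomial.eq_of_derivative_eq_of_eval_zero_eq {R : Type*} [Ring R] [IsAddTorsionFree R]
    {p q : R[X]} (hd : derivative p = derivative q) (h0 : p.eval 0 = q.eval 0) : p = q := by
  have hC := eq_C_of_derivative_eq_zero (p := p - q) (by rw [derivative_sub, hd, sub_self])
  rw [coeff_zero_eq_eval_zero, eval_sub, h0, sub_self, C_0] at hC
  exact sub_eq_zero.mp hC

theorem List.length_eq_sum_of_forall_count_eq {α : Type*} [DecidableEq α] [Fintype α]
    {l : List α} {c : α → ℕ} (h : ∀ i, l.count i = c i) : l.length = ∑ i, c i := by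
  simp_rw [← h]
  simpa using (Multiset.sum_count_eq_card (s := univ) (m := (l : Multiset α)) (by simp)).symm

theorem List.finite_setOf_length_le_of_forall_mem {β : Type*} {s : Set β} (hs : s.Finite)
    (n : ℕ) : {l : List β | l.length ≤ n ∧ ∀ x ∈ l, x ∈ s}.Finite := by
  have := hs.to_subtype
  refine ((List.finite_length_le s n).image (List.map Subtype.val)).subset ?_
  rintro l ⟨hl, hs⟩
  exact ⟨l.attachWith (· ∈ s) hs, by simpa using hl, by simp⟩

section CarlitzFactorizations

variable {α : Type*}

def IsCarlitzFactorization (φ : List (List α)) : Prop :=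
  ∀ p ∈ φ, p ≠ [] ∧ p.IsChain (· ≠ ·)

theorem isCarlitzFactorization_cons {p : List α} {φ : List (List α)} :
    IsCarlitzFactorization (p :: φ) ↔
      (p ≠ [] ∧ p.IsChain (· ≠ ·)) ∧ IsCarlitzFactorization φ :=
  List.forall_mem_cons

theorem IsCarlitzFactorization.eq_nil_of_flatten_eq_nil {φ : List (List α)}
    (hφ : IsCarlitzFactorization φ) (h : φ.flatten = []) : φ = [] :=
  List.eq_nil_iff_forall_not_mem.mpr fun p hp => (hφ p hp).1 (List.flatten_eq_nil_iff.mp h p hp)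

theorem IsCarlitzFactorization.length_le {φ : List (List α)} (hφ : IsCarlitzFactorization φ) :
    φ.length ≤ φ.flatten.length := by
  induction φ with
  | nil => simp
  | cons p ψ ih =>
    rw [isCarlitzFactorization_cons] at hφ
    have := List.length_pos_iff.mpr hφ.1.1
    simp only [List.length_cons, List.flatten_cons, List.length_append]
    have := ih hφ.2
    omega

variable [DecidableEq α]

theorem List.forall_count_cons_eq_add_single_iff {x : α} {l : List α} {c : α → ℕ} :
    (∀ i, (x :: l).count i = (c + Pi.single x 1 : α → ℕ) i) ↔ ∀ i, l.count i = c i := by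
  refine forall_congr' fun i => ?_
  rcases eq_or_ne i x with rfl | hi
  · simp
  · simp [Ne.symm hi]

variable [Fintype α]

theorem finite_setOf_isCarlitzFactorization (c : α → ℕ) :
    {φ : List (List α) |
      IsCarlitzFactorization φ ∧ ∀ i, φ.flatten.count i = c i}.Finite := by
  refine (List.finite_setOf_length_le_of_forall_mem (List.finite_length_le α (∑ i, c i))
    (∑ i, c i)).subset ?_
  rintro φ ⟨hφ, hc⟩
  have hlen := List.length_eq_sum_of_forall_count_eq hc
  refine ⟨hlen ▸ hφ.length_le, fun p hp => ?_⟩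
  rw [Set.mem_ofPred_eq, ← hlen]
  exact (List.sublist_flatten_of_mem hp).length_le

noncomputable def carlitzFactorizations (c : α → ℕ) : Finset (List (List α)) :=
  (finite_setOf_isCarlitzFactorization c).toFinset

theorem mem_carlitzFactorizations {c : α → ℕ} {φ : List (List α)} :
    φ ∈ carlitzFactorizations c ↔
      IsCarlitzFactorization φ ∧ ∀ i, φ.flatten.count i = c i :=
  Set.Finite.mem_toFinset _

theorem filter_carlitzFactorizations_add_single (c : α → ℕ) (x : α) :
    {φ ∈ carlitzFactorizations (c + Pi.single x 1) | φ.flatten.head? = some x} =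
      (carlitzFactorizations c).image (List.cons [x]) ∪
        {φ ∈ carlitzFactorizations c | φ ≠ [] ∧ φ.flatten.head? ≠ some x}.image
          (List.modifyHead (List.cons x)) := by
  ext φ
  simp only [mem_filter, mem_union, mem_image, mem_carlitzFactorizations]
  constructor
  · rintro ⟨⟨hφ, hc⟩, hhead⟩
    obtain _ | ⟨_ | ⟨a, p⟩, ψ⟩ := φ
    · simp at hhead
    · exact absurd rfl (hφ [] (by simp)).1
    obtain rfl : a = x := by simpa using hhead
    rw [isCarlitzFactorization_cons] at hφ
    rw [List.flatten_cons, List.cons_append, List.forall_count_cons_eq_add_single_iff] at hc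
    obtain _ | ⟨b, p⟩ := p
    · exact Or.inl ⟨ψ, ⟨hφ.2, by simpa using hc⟩, rfl⟩
    · obtain ⟨hab, hchain⟩ := List.isChain_cons_cons.mp hφ.1.2
      have hφ' : IsCarlitzFactorization ((b :: p) :: ψ) :=
        isCarlitzFactorization_cons.mpr ⟨⟨by simp, hchain⟩, hφ.2⟩
      refine Or.inr ⟨(b :: p) :: ψ, ⟨⟨hφ', hc⟩, by simp, ?_⟩, rfl⟩
      simpa [eq_comm] using hab
  · rintro (⟨ψ, ⟨hψ, hc⟩, rfl⟩ |
      ⟨_ | ⟨p, ψ⟩, ⟨⟨hψ, hc⟩, hne, hhead⟩, rfl⟩)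
    · have hφ : IsCarlitzFactorization ([x] :: ψ) :=
        isCarlitzFactorization_cons.mpr ⟨⟨by simp, List.isChain_singleton x⟩, hψ⟩
      exact ⟨⟨hφ, by simpa using List.forall_count_cons_eq_add_single_iff.mpr hc⟩, rfl⟩
    · exact absurd rfl hne
    rw [isCarlitzFactorization_cons] at hψ
    obtain _ | ⟨b, p⟩ := p
    · exact absurd rfl hψ.1.1
    have hxb : x ≠ b := by simpa [eq_comm] using hhead
    have hφ : IsCarlitzFactorization ((x :: b :: p) :: ψ) :=
      isCarlitzFactorization_cons.mpr ⟨⟨by simp, hψ.1.2.cons_cons hxb⟩, hψ.2⟩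
    exact ⟨⟨hφ, by simpa using List.forall_count_cons_eq_add_single_iff.mpr hc⟩, rfl⟩

theorem sum_filter_carlitzFactorizations_add_single {M : Type*} [AddCommMonoid M]
    (f : ℕ → M) (c : α → ℕ) (x : α) :
    ∑ φ ∈ carlitzFactorizations (c + Pi.single x 1) with φ.flatten.head? = some x,
        f φ.length =
      ∑ ψ ∈ carlitzFactorizations c, f (ψ.length + 1) +
        ∑ φ ∈ carlitzFactorizations c with φ ≠ [] ∧ φ.flatten.head? ≠ some x,
          f φ.length := by
  have hinj : Function.Injective (List.modifyHead (List.cons x)) := by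
    rintro (_ | ⟨p, φ⟩) (_ | ⟨q, ψ⟩) h <;> simp_all
  rw [filter_carlitzFactorizations_add_single, sum_union, sum_image, sum_image]
  · simp
  · exact fun _ _ _ _ h => hinj h
  · exact fun _ _ _ _ h => List.cons_injective h
  · refine disjoint_left.mpr ?_
    simp only [mem_image, mem_filter, mem_carlitzFactorizations]
    rintro _ ⟨ψ, -, rfl⟩ ⟨_ | ⟨p, φ⟩, ⟨⟨hφ, -⟩, hne, -⟩, h⟩
    · exact hne rfl
    · simp only [List.modifyHead_cons, List.cons.injEq, true_and] at h
      exact (hφ p (by simp)).1 h.1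

theorem carlitzFactorizations_zero : carlitzFactorizations (0 : α → ℕ) = {[]} := by
  ext φ
  simp only [mem_carlitzFactorizations, Pi.zero_apply, List.count_eq_zero, mem_singleton]
  constructor
  · rintro ⟨hφ, hc⟩
    exact hφ.eq_nil_of_flatten_eq_nil (List.eq_nil_iff_forall_not_mem.mpr hc)
  · rintro rfl
    simp [IsCarlitzFactorization]

theorem flatten_ne_nil_of_mem_carlitzFactorizations {c : α → ℕ} (hc : c ≠ 0)
    {φ : List (List α)} (hφ : φ ∈ carlitzFactorizations c) : φ.flatten ≠ [] := by
  intro h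
  refine hc (funext fun i => ?_)
  rw [← (mem_carlitzFactorizations.mp hφ).2 i, h, List.count_nil, Pi.zero_apply]

noncomputable def lagSum (c : α → ℕ) : ℝ[X] :=
  ∑ φ ∈ carlitzFactorizations c, lag φ.length

noncomputable def lagSumStartingWith (c : α → ℕ) (x : α) : ℝ[X] :=
  ∑ φ ∈ carlitzFactorizations c with φ.flatten.head? = some x, lag φ.length

theorem lagSumStartingWith_eq_zero {c : α → ℕ} {x : α} (hx : c x = 0) :
    lagSumStartingWith c x = 0 := by
  refine sum_eq_zero fun φ hφ => absurd hx ?_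
  rw [mem_filter, mem_carlitzFactorizations] at hφ
  rw [← hφ.1.2 x]
  exact (List.count_pos_iff.mpr (List.mem_of_head? hφ.2)).ne'

theorem lagSum_eq_sum_lagSumStartingWith {c : α → ℕ} (hc : c ≠ 0) :
    lagSum c = ∑ x, lagSumStartingWith c x := by
  rw [lagSum, ← sum_fiberwise_of_maps_to (g := fun φ => φ.flatten.head?) (t := univ)
    (fun _ _ => mem_univ _), Fintype.sum_option]
  refine add_eq_right.mpr (sum_eq_zero fun φ hφ => absurd ?_
    (flatten_ne_nil_of_mem_carlitzFactorizations hc (mem_filter.mp hφ).1))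
  exact List.head?_eq_none_iff.mp (mem_filter.mp hφ).2

theorem derivative_lagSumStartingWith_add_single (c : α → ℕ) (x : α) :
    derivative (lagSumStartingWith (c + Pi.single x 1) x) =
      lagSum c - derivative (lagSumStartingWith c x) := by
  have hsplit := sum_filter_add_sum_filter_not (carlitzFactorizations c)
    (fun φ => φ.flatten.head? = some x) (fun φ => derivative (lag φ.length))
  -- The empty factorization contributes the constant `lag 0`, which differentiation kills.
  have hnil : ∑ φ ∈ carlitzFactorizations c with φ ≠ [] ∧ φ.flatten.head? ≠ some x,
      derivative (lag φ.length) =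
        ∑ φ ∈ carlitzFactorizations c with ¬ φ.flatten.head? = some x,
          derivative (lag φ.length) := by
    rw [← sum_filter_of_ne (p := fun φ => φ ≠ [])
      (s := {φ ∈ carlitzFactorizations c | ¬ φ.flatten.head? = some x}), filter_filter]
    · simp_rw [and_comm]
    · rintro φ - h rfl
      simp [lag_zero] at h
  rw [lagSumStartingWith, sum_filter_carlitzFactorizations_add_single,
    derivative_add, derivative_sum, derivative_sum, hnil]
  simp only [derivative_lag_succ, sum_sub_distrib]
  rw [lagSum, lagSumStartingWith, derivative_sum, ← hsplit]
  abel

theorem lagSum_eq_prod_of_derivative {c : α → ℕ}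
    (h : ∀ x, derivative (lagSumStartingWith c x) =
      (∏ i ∈ univ.erase x, lag (c i)) * derivative (lag (c x))) :
    lagSum c = ∏ i, lag (c i) := by
  rcases eq_or_ne c 0 with rfl | hc
  · simp [lagSum, carlitzFactorizations_zero, lag_zero]
  obtain ⟨x, hx⟩ := Function.ne_iff.mp hc
  refine eq_of_derivative_eq_of_eval_zero_eq ?_ ?_
  · rw [lagSum_eq_sum_lagSumStartingWith hc, derivative_sum, derivative_prod_finset]
    exact sum_congr rfl fun x _ => h x
  · rw [eval_prod, prod_eq_zero (mem_univ x), lagSum, eval_finsetSum]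
    · refine sum_eq_zero fun φ hφ => ?_
      have hne : φ ≠ [] := by
        rintro rfl
        exact flatten_ne_nil_of_mem_carlitzFactorizations hc hφ rfl
      obtain ⟨p, ψ, rfl⟩ := List.exists_cons_of_ne_nil hne
      exact eval_zero_lag_succ ψ.length
    · obtain ⟨k, hk⟩ := Nat.exists_eq_succ_of_ne_zero hx
      rw [hk, eval_zero_lag_succ]

theorem derivative_lagSumStartingWith (c : α → ℕ) (x : α) :
    derivative (lagSumStartingWith c x) =
      (∏ i ∈ univ.erase x, lag (c i)) * derivative (lag (c x)) := by
  induction hN : ∑ i, c i using Nat.strong_induction_on generalizing c x with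
  | _ N ih =>
    rcases eq_or_ne (c x) 0 with hx | hx
    · rw [lagSumStartingWith_eq_zero hx, hx, lag_zero, derivative_one, mul_zero, derivative_zero]
    obtain ⟨c, rfl⟩ : ∃ c' : α → ℕ, c = c' + Pi.single x 1 := by
      refine ⟨Function.update c x (c x - 1), funext fun i => ?_⟩
      rcases eq_or_ne i x with rfl | hi
      · simp only [Pi.add_apply, Function.update_self, Pi.single_eq_same]; omega
      · simp [hi]
    have hlt : ∑ i, c i < N := by
      simp [← hN, sum_add_distrib]
    have ih' := fun y => ih _ hlt c y rfl
    have hprod : ∏ i ∈ univ.erase x, lag ((c + Pi.single x 1 : α → ℕ) i) =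
        ∏ i ∈ univ.erase x, lag (c i) :=
      prod_congr rfl fun i hi => by simp [Pi.single_eq_of_ne (ne_of_mem_erase hi)]
    rw [derivative_lagSumStartingWith_add_single, lagSum_eq_prod_of_derivative ih', ih',
      hprod, ← mul_prod_erase univ (fun i => lag (c i)) (mem_univ x), Pi.add_apply,
      Pi.single_eq_same, derivative_lag_succ]
    ring

theorem lagSum_eq_sum_card_smul_lag (c : α → ℕ) :
    lagSum c = ∑ k ∈ range (∑ i, c i + 1),
      (#{φ ∈ carlitzFactorizations c | φ.length = k} : ℝ) • lag k := by
  have hlen : ∀ φ ∈ carlitzFactorizations c, φ.length ∈ range (∑ i, c i + 1) := by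
    intro φ hφ
    rw [mem_carlitzFactorizations] at hφ
    rw [mem_range, Nat.lt_succ_iff, ← List.length_eq_sum_of_forall_count_eq hφ.2]
    exact hφ.1.length_le
  rw [lagSum, ← sum_fiberwise_of_maps_to hlen]
  refine sum_congr rfl fun k _ => ?_
  rw [sum_congr rfl fun φ hφ => by rw [(mem_filter.mp hφ).2], sum_const, Nat.cast_smul_eq_nsmul]

end CarlitzFactorizations

theorem stmt3_general (m : ℕ) (r : Fin m → ℕ)
    (n : ℕ → ℕ)
    (hn : ∀ k, n k = Nat.card {φ : List (List (Fin m)) //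
      φ.length = k ∧ (∀ p ∈ φ, p ≠ [] ∧ List.Chain' (· ≠ ·) p) ∧
      ∀ i, φ.flatten.count i = r i}) :
    ∏ i, lag (r i) = ∑ k ∈ Finset.range (∑ i, r i + 1), (n k : ℝ) • lag k := by
  have hcard : ∀ k, n k = #{φ ∈ carlitzFactorizations r | φ.length = k} := by
    intro k
    rw [hn k, ← Nat.card_eq_finsetCard]
    refine Nat.card_congr (Equiv.subtypeEquivRight fun φ => ?_)
    rw [mem_filter, mem_carlitzFactorizations]
    exact and_comm
  simp_rw [hcard]
  rw [← lagSum_eq_prod_of_derivative (derivative_lagSumStartingWith r),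
    lagSum_eq_sum_card_smul_lag]

/-- For an alphabet of `m` distinct letters and prescribed multiplicities `r i`:
`∏_{i} l_{r i}(t) = Σ_k n_k l_k(t)`, where `n_k` is the number of factorizations on the
alphabet with `k` parts, each part a nonempty Carlitz word, in which letter `i` is used
exactly `r i` times.  The sum is finite: `n_k = 0` for `k > Σ_i r i`. -/
theorem stmt3 (m : ℕ) (hm : 1 ≤ m) (r : Fin m → ℕ)
    (n : ℕ → ℕ)
    (hn : ∀ k, n k = Nat.card {φ : List (List (Fin m)) //
      φ.length = k ∧ (∀ p ∈ φ, p ≠ [] ∧ List.Chain' (· ≠ ·) p) ∧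
      ∀ i, φ.flatten.count i = r i}) :
    ∏ i, lag (r i) = ∑ k ∈ Finset.range (∑ i, r i + 1), (n k : ℝ) • lag k :=
  stmt3_general m r n hn
end

section
/- For all integers i, j ≥ 1, the polynomial l_i(t)·l_j(t) ∈ ℝ[t] has zero constant term, and i · Φ( (l_i(t)·l_j(t))/t ) = 1 if i = j and 0 otherwise. -/
/-- The linear functional `Φ` with `Φ(t^n) = n!`. -/
noncomputable def Phi (p : Polynomial ℝ) : ℝ :=
  ∑ n ∈ p.support, p.coeff n * (Nat.factorial n)
/-!
Write `l_{m+1} = Σ_{a ≤ m} c_a t^(a+1)` with `c_a = (-1)^(m-a) C(m,a) / (a+1)!`. Then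
`Φ(t^b l_{m+1}) = Σ_a (-1)^(m-a) C(m,a) (a+b+1)!/(a+1)!` is the `m`-th forward difference at `0`
of the monic degree-`b` polynomial `a ↦ (a+2)(a+3)⋯(a+b+1)`, so it vanishes for `b < m` and
equals `m!` for `b = m`. As `l_{n+1}/t` has degree `n` and leading coefficient `1/(n+1)!`,
`Φ(l_{m+1} l_{n+1}/t)` vanishes for `n < m` (and for `m < n` by symmetry), while for `n = m`
it is `m!/(m+1)! = 1/(m+1)`.
-/

open Finset Polynomial fwdDiff
open scoped Nat

noncomputable def Phiₗ : ℝ[X] →ₗ[ℝ] ℝ := lsum fun n ↦ (n ! : ℝ) • LinearMap.id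

lemma coe_Phiₗ : ⇑Phiₗ = Phi := by
  ext p
  simp only [Phiₗ, lsum_apply, LinearMap.smul_apply, LinearMap.id_apply, smul_eq_mul, Phi,
    Polynomial.sum_def, mul_comm]

lemma Phi_C_mul_X_pow (c : ℝ) (n : ℕ) : Phi (C c * X ^ n) = c * n ! := by
  rw [← coe_Phiₗ, C_mul_X_pow_eq_monomial]
  simp [Phiₗ, sum_monomial_index, mul_comm]

noncomputable def lagCoeff (m a : ℕ) : ℝ := (-1) ^ (m - a) * m.choose a / (a + 1)!

lemma lag_succ (m : ℕ) :
    lag (m + 1) = ∑ a ∈ range (m + 1), C (lagCoeff m a) * X ^ (a + 1) := by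
  rw [lag, if_neg m.succ_ne_zero, ← Ico_add_one_right_eq_Icc, sum_Ico_eq_sum_range]
  refine sum_congr rfl fun a _ ↦ ?_
  rw [lagCoeff, add_comm 1 a, Nat.add_sub_add_right, Nat.add_sub_cancel, Nat.add_sub_cancel]

lemma lag_succ_eq_X_mul (m : ℕ) :
    lag (m + 1) = X * ∑ a ∈ range (m + 1), C (lagCoeff m a) * X ^ a := by
  simp only [lag_succ, mul_sum, pow_succ]
  exact sum_congr rfl fun a _ ↦ by ring

noncomputable def shiftedPochhammer (b : ℕ) : ℝ[X] := (ascPochhammer ℝ b).comp (X + C 2)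

lemma shiftedPochhammer_monic (b : ℕ) : (shiftedPochhammer b).Monic :=
  (monic_ascPochhammer ℝ b).comp_X_add_C 2

lemma natDegree_shiftedPochhammer (b : ℕ) : (shiftedPochhammer b).natDegree = b := by
  simp [shiftedPochhammer, natDegree_comp, ascPochhammer_natDegree]

lemma factorial_mul_eval_shiftedPochhammer (a b : ℕ) :
    ((a + 1)! : ℝ) * (shiftedPochhammer b).eval (a : ℝ) = (a + 1 + b)! := by
  have h := congrArg (Nat.cast (R := ℝ)) (Nat.factorial_mul_ascFactorial (a + 1) b)
  rw [← ascPochhammer_nat_eq_ascFactorial] at h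
  push_cast at h
  simpa [shiftedPochhammer, add_assoc, one_add_one_eq_two] using h

lemma Phi_X_pow_mul_lag_succ (b m : ℕ) :
    Phi (X ^ b * lag (m + 1)) = Δ_[1] ^[m] (shiftedPochhammer b).eval 0 := by
  rw [lag_succ, mul_sum, ← coe_Phiₗ, map_sum, fwdDiff_iter_eq_sum_shift]
  refine sum_congr rfl fun a _ ↦ ?_
  rw [mul_left_comm, ← pow_add, coe_Phiₗ, Phi_C_mul_X_pow, lagCoeff, zero_add, nsmul_one,
    add_comm b, ← factorial_mul_eval_shiftedPochhammer, zsmul_eq_mul]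
  have : ((a + 1)! : ℝ) ≠ 0 := by positivity
  field_simp
  push_cast
  ring

lemma Phi_X_pow_mul_lag_succ_of_lt {b m : ℕ} (h : b < m) : Phi (X ^ b * lag (m + 1)) = 0 := by
  rw [Phi_X_pow_mul_lag_succ,
    fwdDiff_iter_eq_zero_of_degree_lt ((natDegree_shiftedPochhammer b).trans_lt h), Pi.zero_apply]

lemma Phi_X_pow_mul_lag_succ_self (m : ℕ) : Phi (X ^ m * lag (m + 1)) = m ! := by
  have h := (shiftedPochhammer m).fwdDiff_iter_degree_eq_factorial
  rw [natDegree_shiftedPochhammer, (shiftedPochhammer_monic m).leadingCoeff, one_smul] at h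
  rw [Phi_X_pow_mul_lag_succ, h, Pi.natCast_apply]

lemma divX_X_mul {R : Type*} [Semiring R] (p : R[X]) : (X * p).divX = p :=
  ext fun n ↦ by rw [coeff_divX, coeff_X_mul]

lemma divX_mul_lag_succ (p : ℝ[X]) (n : ℕ) :
    (p * lag (n + 1)).divX = p * ∑ b ∈ range (n + 1), C (lagCoeff n b) * X ^ b := by
  rw [lag_succ_eq_X_mul, mul_left_comm, divX_X_mul]

lemma Phi_mul_sum_C_mul_X_pow (p : ℝ[X]) (s : Finset ℕ) (c : ℕ → ℝ) :
    Phi (p * ∑ b ∈ s, C (c b) * X ^ b) = ∑ b ∈ s, c b * Phi (X ^ b * p) := by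
  rw [mul_sum, ← coe_Phiₗ, map_sum]
  refine sum_congr rfl fun b _ ↦ ?_
  rw [show p * (C (c b) * X ^ b) = c b • (X ^ b * p) by rw [smul_eq_C_mul]; ring, map_smul,
    smul_eq_mul]

lemma Phi_divX_lag_succ_mul_lag_succ_of_lt {m n : ℕ} (h : n < m) :
    Phi ((lag (m + 1) * lag (n + 1)).divX) = 0 := by
  rw [divX_mul_lag_succ, Phi_mul_sum_C_mul_X_pow]
  refine sum_eq_zero fun b hb ↦ ?_
  rw [Phi_X_pow_mul_lag_succ_of_lt ((mem_range.mp hb).trans_le h), mul_zero]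

lemma Phi_divX_lag_succ_mul_self (m : ℕ) :
    Phi ((lag (m + 1) * lag (m + 1)).divX) = ((m : ℝ) + 1)⁻¹ := by
  rw [divX_mul_lag_succ, Phi_mul_sum_C_mul_X_pow, sum_range_succ, sum_eq_zero fun b hb ↦ ?_,
    Phi_X_pow_mul_lag_succ_self, lagCoeff, Nat.sub_self, Nat.choose_self, Nat.factorial_succ,
    zero_add]
  · push_cast
    field_simp
  · rw [Phi_X_pow_mul_lag_succ_of_lt (mem_range.mp hb), mul_zero]

/-- For `i, j ≥ 1`, the polynomial `l_i(t)·l_j(t)` has zero constant term and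
`i · Φ((l_i·l_j)/t) = δ_{ij}`; division by `t` is `Polynomial.divX`, exact here since
the constant term vanishes. -/
theorem stmt15 (i j : ℕ) (hi : 1 ≤ i) (hj : 1 ≤ j) :
    (lag i * lag j).coeff 0 = 0 ∧
    (i : ℝ) * Phi ((lag i * lag j).divX) = if i = j then 1 else 0 := by
  obtain ⟨m, rfl⟩ := Nat.exists_eq_add_of_le' hi
  obtain ⟨n, rfl⟩ := Nat.exists_eq_add_of_le' hj
  refine ⟨by rw [lag_succ_eq_X_mul m, mul_assoc, coeff_X_mul_zero], ?_⟩
  rcases lt_trichotomy m n with h | rfl | h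
  · rw [mul_comm (lag _), Phi_divX_lag_succ_mul_lag_succ_of_lt h, mul_zero, if_neg (by omega)]
  · rw [Phi_divX_lag_succ_mul_self, if_pos rfl, Nat.cast_succ, mul_inv_cancel₀ (by positivity)]
  · rw [Phi_divX_lag_succ_mul_lag_succ_of_lt h, mul_zero, if_neg (by omega)]
end
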